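/- In the two-state i.i.d. model with critical set J^(n) and N^(n) = |J^(n)|, the size N^(n) tends to infinity with high probability as n → ∞: there exists a constant λ > 0 such that P(N^(n) > (λ/2) n^{β/2}) → 1 as n → ∞. -/

import Mathlib

open Filter Set MeasureTheory ProbabilityTheory

noncomputable section

/-- The uniform probability measure on the interval `[0, a]`. -/
def unifIcc (a : ℝ) : Measure ℝ :=
  (ENNReal.ofReal a)⁻¹ • (volume.restrict (Set.Icc 0 a))

/-- The critical set `J⁽ⁿ⁾` of the two-state i.i.d. model: the set of users `u` whose
parameter `p_u` satisfies `p₁ ≤ p_u ≤ p₁ + ε_n` and whose obfuscated parameter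
`Q_u = p_u + (1 - 2 p_u) R_u` satisfies `p₁ + ε_n ≤ Q_u ≤ p₁ + (1 - 2 p₁) a_n`. -/
def criticalSet {Ω : Type*} {n : ℕ} (P R : Fin n → Ω → ℝ) (p₁ ε a : ℝ) (ω : Ω) :
    Finset (Fin n) :=
  Finset.univ.filter (fun u =>
    (p₁ ≤ P u ω ∧ P u ω ≤ p₁ + ε) ∧
    p₁ + ε ≤ P u ω + (1 - 2 * P u ω) * R u ω ∧
    P u ω + (1 - 2 * P u ω) * R u ω ≤ p₁ + (1 - 2 * p₁) * a)

open scoped Finset Topology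

/-!
Each user `u ≠ 0` is critical independently of the others, with probability at least
`δ₁ ε_n / 2`: the rectangle `[p₁, p₁ + ε_n] × [ε_n / (1 - 2p₁), a_n - ε_n / (1 - 2p₁)]` of values
of `(p_u, R_u)` lies in the critical region, `p_u` falls into its first side with probability at
least `δ₁ ε_n`, and since `ε_n = o(a_n)` the noise `R_u` falls into its second side with
probability at least `1/2`. So `N⁽ⁿ⁾` dominates a sum of `n - 1` pairwise independent indicators
with mean `m_n ≥ δ₁ n ε_n / 4 = (δ₁ / 4) n^{β/2}`, and Chebyshev's inequality bounds
`P(N⁽ⁿ⁾ ≤ m_n / 2)` by `4 / m_n → 0`.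
-/

section Chebyshev

variable {Ω : Type*} [MeasurableSpace Ω] {μ : Measure Ω}

lemma meas_le_le_variance_div_sq [IsFiniteMeasure μ] {X : Ω → ℝ} (hX : MemLp X 2 μ) {t : ℝ}
    (ht : t < μ[X]) :
    μ {ω | X ω ≤ t} ≤ ENNReal.ofReal (variance X μ / (μ[X] - t) ^ 2) := by
  refine (measure_mono fun ω (hω : X ω ≤ t) => ?_).trans
    (meas_ge_le_variance_div_sq hX (sub_pos.2 ht))
  show μ[X] - t ≤ |X ω - μ[X]|
  rw [abs_sub_comm]
  exact (sub_le_sub_left hω _).trans (le_abs_self _)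

lemma variance_indicator_one_le [IsProbabilityMeasure μ] {E : Set Ω} (hE : MeasurableSet E) :
    variance (E.indicator 1) μ ≤ μ.real E := by
  calc variance (E.indicator 1) μ ≤ μ[E.indicator 1 ^ 2] :=
        variance_le_expectation_sq ((measurable_const.indicator hE).aestronglyMeasurable)
    _ = μ.real E := by
        rw [← integral_indicator_one hE]
        congr 1
        ext ω
        by_cases h : ω ∈ E <;> simp [h]

open Classical in
lemma measure_card_filter_mem_le_le [IsProbabilityMeasure μ] {ι α : Type*} [MeasurableSpace α]
    {s : Finset ι} {Z : ι → Ω → α} {B : Set α} (hZ : ∀ i ∈ s, Measurable (Z i))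
    (hB : MeasurableSet B) (hindep : (s : Set ι).Pairwise fun i j => IndepFun (Z i) (Z j) μ)
    {t : ℝ} (ht : 0 < t) (hmean : 2 * t ≤ ∑ i ∈ s, μ.real (Z i ⁻¹' B)) :
    μ {ω | (#{i ∈ s | Z i ω ∈ B} : ℝ) ≤ t} ≤ ENNReal.ofReal (2 / t) := by
  set X : ι → Ω → ℝ := fun i => (Z i ⁻¹' B).indicator 1
  have hE : ∀ i ∈ s, MeasurableSet (Z i ⁻¹' B) := fun i hi => hB.preimage (hZ i hi)
  have hXL2 : ∀ i ∈ s, MemLp (X i) 2 μ := fun i hi =>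
    memLp_indicator_const 2 (hE i hi) 1 (Or.inr (measure_ne_top _ _))
  have hcount : ∀ ω, (#{i ∈ s | Z i ω ∈ B} : ℝ) = (∑ i ∈ s, X i) ω := fun ω => by
    rw [Finset.natCast_card_filter, Finset.sum_apply]
    simp [X, Set.indicator_apply]
  have hmeanX : μ[∑ i ∈ s, X i] = ∑ i ∈ s, μ.real (Z i ⁻¹' B) := by
    simp only [Finset.sum_apply]
    rw [integral_finsetSum s fun i hi => (hXL2 i hi).integrable one_le_two]
    exact Finset.sum_congr rfl fun i hi => integral_indicator_one (hE i hi)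
  have hvar : variance (∑ i ∈ s, X i) μ ≤ μ[∑ i ∈ s, X i] := by
    have hXindep : (s : Set ι).Pairwise fun i j => IndepFun (X i) (X j) μ :=
      fun i hi j hj hij => by
        have hφ : Measurable (B.indicator (1 : α → ℝ)) := measurable_const.indicator hB
        exact (hindep hi hj hij).comp hφ hφ
    rw [IndepFun.variance_sum hXL2 hXindep, hmeanX]
    exact Finset.sum_le_sum fun i hi => variance_indicator_one_le (hE i hi)
  simp_rw [hcount]
  refine (meas_le_le_variance_div_sq (memLp_finsetSum' s hXL2) (by linarith)).trans
    (ENNReal.ofReal_le_ofReal ?_)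
  rw [hmeanX] at hvar ⊢
  rw [div_le_div_iff₀ (by nlinarith) ht]
  nlinarith [mul_le_mul_of_nonneg_right hvar ht.le]

end Chebyshev

lemma ProbabilityTheory.iIndepFun.indepFun_prodMk_of_sumElim {Ω ι β : Type*} [MeasurableSpace Ω]
    {μ : Measure Ω} [MeasurableSpace β] {X Y : ι → Ω → β} (h : iIndepFun (Sum.elim X Y) μ)
    (hX : ∀ i, Measurable (X i)) (hY : ∀ i, Measurable (Y i)) {i j : ι} (hij : i ≠ j) :
    IndepFun (fun ω => (X i ω, Y i ω)) (fun ω => (X j ω, Y j ω)) μ :=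
  h.indepFun_prodMk_prodMk (Sum.forall.2 ⟨hX, hY⟩) (.inl i) (.inr i) (.inl j) (.inr j)
    (by simp [hij]) (by simp) (by simp) (by simp [hij])

lemma tendsto_measure_of_tendsto_measure_compl {ι : Type*} {l : Filter ι} {Ω : ι → Type*}
    [∀ i, MeasurableSpace (Ω i)] {μ : ∀ i, Measure (Ω i)} [∀ i, IsProbabilityMeasure (μ i)]
    {s : ∀ i, Set (Ω i)} (h : Tendsto (fun i => μ i (s i)ᶜ) l (𝓝 0)) :
    Tendsto (fun i => μ i (s i)) l (𝓝 1) := by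
  have hlow : Tendsto (fun i => 1 - μ i (s i)ᶜ) l (𝓝 1) := by
    simpa using ENNReal.Tendsto.sub tendsto_const_nhds h (.inl ENNReal.one_ne_top)
  refine tendsto_of_tendsto_of_tendsto_of_le_of_le hlow tendsto_const_nhds (fun i => ?_)
    (fun i => prob_le_one)
  rw [tsub_le_iff_right, ← measure_univ (μ := μ i), ← union_compl_self (s i)]
  exact measure_union_le _ _

lemma unifIcc_Icc {a x y : ℝ} (ha : 0 < a) (hx : 0 ≤ x) (hy : y ≤ a) :
    unifIcc a (Icc x y) = ENNReal.ofReal ((y - x) / a) := by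
  rw [unifIcc, Measure.smul_apply, Measure.restrict_apply measurableSet_Icc, smul_eq_mul,
    Icc_inter_Icc, max_eq_left hx, min_eq_left hy, Real.volume_Icc,
    ENNReal.ofReal_div_of_pos ha, div_eq_mul_inv, mul_comm]

lemma ofReal_mul_le_withDensity_Icc {f : ℝ → ℝ} {δ x y : ℝ} (hxy : x ≤ y)
    (hf : ∀ z ∈ Ioo x y, δ ≤ f z) :
    ENNReal.ofReal (δ * (y - x)) ≤
      volume.withDensity (fun z => ENNReal.ofReal (f z)) (Icc x y) := by
  rw [withDensity_apply _ measurableSet_Icc]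
  calc ENNReal.ofReal (δ * (y - x))
      ≤ ∫⁻ _ in Ioo x y, ENNReal.ofReal δ := by
        rw [setLIntegral_const, Real.volume_Ioo, ENNReal.ofReal_mul' (sub_nonneg.2 hxy)]
    _ ≤ ∫⁻ z in Ioo x y, ENNReal.ofReal (f z) :=
        setLIntegral_mono' measurableSet_Ioo fun z hz => ENNReal.ofReal_le_ofReal (hf z hz)
    _ ≤ ∫⁻ z in Icc x y, ENNReal.ofReal (f z) :=
        lintegral_mono_set Ioo_subset_Icc_self

lemma tendsto_natCast_rpow_neg_atTop {r : ℝ} (hr : 0 < r) :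
    Tendsto (fun n : ℕ => (n : ℝ) ^ (-r)) atTop (𝓝 0) :=
  (tendsto_rpow_neg_atTop hr).comp tendsto_natCast_atTop_atTop

lemma eventually_four_mul_rpow_le {β c : ℝ} (hβ : 0 < β) (hc : 0 < c) :
    ∀ᶠ n : ℕ in atTop, 4 * (n : ℝ) ^ (-(1 - β / 2)) ≤ c * (n : ℝ) ^ (-(1 - β)) := by
  filter_upwards [(tendsto_natCast_rpow_neg_atTop (half_pos hβ)).eventually_le_const
    (div_pos hc four_pos), eventually_gt_atTop 0] with n hsmall hn
  have hsplit : (n : ℝ) ^ (-(1 - β / 2)) = (n : ℝ) ^ (-(1 - β)) * (n : ℝ) ^ (-(β / 2)) := by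
    rw [← Real.rpow_add (by exact_mod_cast hn)]
    ring_nf
  rw [hsplit]
  have : 0 ≤ (n : ℝ) ^ (-(1 - β)) := by positivity
  nlinarith

lemma mul_rpow_le_natCast_sub_one_mul_rpow_neg {n : ℕ} (hn : 2 ≤ n) {δ : ℝ} (hδ : 0 ≤ δ)
    (r : ℝ) : δ / 4 * (n : ℝ) ^ r ≤ (n - 1) * (δ * (n : ℝ) ^ (-(1 - r)) / 2) := by
  have hn0 : (0 : ℝ) < n := by positivity
  have hnr : (n : ℝ) ^ r = n * (n : ℝ) ^ (-(1 - r)) := by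
    conv_lhs => rw [show r = 1 + -(1 - r) by ring]
    rw [Real.rpow_add hn0, Real.rpow_one]
  have hn2 : (0 : ℝ) ≤ n - 2 := by rw [sub_nonneg]; exact_mod_cast hn
  rw [hnr]
  nlinarith [mul_nonneg (mul_nonneg hδ (Real.rpow_nonneg hn0.le (-(1 - r)))) hn2]

lemma natCast_sub_one_le_card_filter_val_ne_zero (n : ℕ) :
    (n : ℝ) - 1 ≤ #{u : Fin n | (u : ℕ) ≠ 0} := by
  have hsplit := Finset.card_filter_add_card_filter_not (s := Finset.univ)
    (fun u : Fin n => (u : ℕ) ≠ 0)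
  have hzero : #{u : Fin n | ¬(u : ℕ) ≠ 0} ≤ 1 :=
    Finset.card_le_one.2 fun u hu v hv => by simp_all [Fin.ext_iff]
  rw [Finset.card_univ, Fintype.card_fin] at hsplit
  have : n ≤ #{u : Fin n | (u : ℕ) ≠ 0} + 1 := by omega
  linarith [show (n : ℝ) ≤ #{u : Fin n | (u : ℕ) ≠ 0} + 1 by exact_mod_cast this]

def criticalRegion (p₁ ε a : ℝ) : Set (ℝ × ℝ) :=
  {x | (p₁ ≤ x.1 ∧ x.1 ≤ p₁ + ε) ∧
    p₁ + ε ≤ x.1 + (1 - 2 * x.1) * x.2 ∧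
    x.1 + (1 - 2 * x.1) * x.2 ≤ p₁ + (1 - 2 * p₁) * a}

lemma measurableSet_criticalRegion (p₁ ε a : ℝ) : MeasurableSet (criticalRegion p₁ ε a) := by
  unfold criticalRegion
  measurability

lemma mem_criticalSet_iff {Ω : Type*} {n : ℕ} {P R : Fin n → Ω → ℝ} {p₁ ε a : ℝ} {ω : Ω}
    {u : Fin n} :
    u ∈ criticalSet P R p₁ ε a ω ↔ (P u ω, R u ω) ∈ criticalRegion p₁ ε a := by
  simp [criticalSet, criticalRegion]

lemma Icc_prod_Icc_subset_criticalRegion {p₁ ε a : ℝ} (hp₁ : 2 * p₁ < 1) (hε : 0 ≤ ε)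
    (ha : a ≤ 1 / 2) :
    Icc p₁ (p₁ + ε) ×ˢ Icc (ε / (1 - 2 * p₁)) (a - ε / (1 - 2 * p₁))
      ⊆ criticalRegion p₁ ε a := by
  rintro ⟨p, r⟩ ⟨⟨hp, hp'⟩, hr, hr'⟩
  have hl : (1 - 2 * p₁) * (ε / (1 - 2 * p₁)) = ε := mul_div_cancel₀ ε (by linarith)
  have hl0 : 0 ≤ ε / (1 - 2 * p₁) := div_nonneg hε (by linarith)
  dsimp only at hp hp' hr hr'
  have hQ : p + (1 - 2 * p) * r - p₁ = (p - p₁) * (1 - 2 * r) + (1 - 2 * p₁) * r := by ring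
  have h1 : 0 ≤ (p - p₁) * (1 - 2 * r) := mul_nonneg (by linarith) (by linarith)
  have h2 : (p - p₁) * (1 - 2 * r) ≤ ε := by nlinarith
  have h3 : ε ≤ (1 - 2 * p₁) * r := by nlinarith
  have h4 : (1 - 2 * p₁) * r ≤ (1 - 2 * p₁) * a - ε := by nlinarith
  exact ⟨⟨hp, hp'⟩, by linarith, by linarith⟩

lemma le_measureReal_preimage_criticalRegion {Ω : Type*} [MeasurableSpace Ω] {μ : Measure Ω}
    [IsProbabilityMeasure μ] {X Y : Ω → ℝ} (hX : Measurable X) (hY : Measurable Y)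
    (hXY : IndepFun X Y μ) {f : ℝ → ℝ} {δ : ℝ} (hf : ∀ z ∈ Ioo (0 : ℝ) 1, δ ≤ f z)
    (hXlaw : μ.map X = volume.withDensity (fun z => ENNReal.ofReal (f z)))
    {p₁ ε a : ℝ} (hYlaw : μ.map Y = unifIcc a) (hp₁0 : 0 ≤ p₁) (hp₁ : 2 * p₁ < 1)
    (hε0 : 0 ≤ ε) (hε1 : p₁ + ε ≤ 1) (ha0 : 0 < a) (ha : 4 * ε ≤ (1 - 2 * p₁) * a)
    (ha2 : a ≤ 1 / 2) :
    δ * ε / 2 ≤ μ.real ((fun ω => (X ω, Y ω)) ⁻¹' criticalRegion p₁ ε a) := by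
  set l := ε / (1 - 2 * p₁)
  have hl0 : 0 ≤ l := div_nonneg hε0 (by linarith)
  have hl : 4 * l ≤ a := by rw [mul_div_assoc', div_le_iff₀ (by linarith)]; linarith
  have hXI : ENNReal.ofReal (δ * ε) ≤ μ (X ⁻¹' Icc p₁ (p₁ + ε)) := by
    rw [← Measure.map_apply hX measurableSet_Icc, hXlaw]
    have hIoo : ∀ z ∈ Ioo p₁ (p₁ + ε), δ ≤ f z := fun z hz =>
      hf z ⟨hp₁0.trans_lt hz.1, hz.2.trans_le hε1⟩
    simpa using ofReal_mul_le_withDensity_Icc (by linarith) hIoo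
  have hYI : ENNReal.ofReal (1 / 2) ≤ μ (Y ⁻¹' Icc l (a - l)) := by
    rw [← Measure.map_apply hY measurableSet_Icc, hYlaw, unifIcc_Icc ha0 hl0 (by linarith)]
    exact ENNReal.ofReal_le_ofReal (by rw [le_div_iff₀ ha0]; linarith)
  have hrect : X ⁻¹' Icc p₁ (p₁ + ε) ∩ Y ⁻¹' Icc l (a - l)
      ⊆ (fun ω => (X ω, Y ω)) ⁻¹' criticalRegion p₁ ε a :=
    fun ω hω => Icc_prod_Icc_subset_criticalRegion hp₁ hε0 ha2 ⟨hω.1, hω.2⟩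
  rw [measureReal_def, ← ENNReal.ofReal_le_iff_le_toReal (measure_ne_top _ _)]
  calc ENNReal.ofReal (δ * ε / 2)
      = ENNReal.ofReal (δ * ε) * ENNReal.ofReal (1 / 2) := by
        rw [← ENNReal.ofReal_mul' (by norm_num)]; ring_nf
    _ ≤ μ (X ⁻¹' Icc p₁ (p₁ + ε)) * μ (Y ⁻¹' Icc l (a - l)) := mul_le_mul' hXI hYI
    _ = μ (X ⁻¹' Icc p₁ (p₁ + ε) ∩ Y ⁻¹' Icc l (a - l)) :=
        (hXY.measure_inter_preimage_eq_mul _ _ measurableSet_Icc measurableSet_Icc).symm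
    _ ≤ _ := measure_mono hrect

lemma measure_card_criticalSet_le_le {Ω : Type*} [MeasurableSpace Ω] {μ : Measure Ω}
    [IsProbabilityMeasure μ] {n : ℕ} {P R : Fin n → Ω → ℝ} (hP : ∀ u, Measurable (P u))
    (hR : ∀ u, Measurable (R u)) (hindep : iIndepFun (Sum.elim P R) μ) {f : ℝ → ℝ} {δ : ℝ}
    (hδ : 0 ≤ δ) (hf : ∀ z ∈ Ioo (0 : ℝ) 1, δ ≤ f z)
    (hPlaw : ∀ u : Fin n, (u : ℕ) ≠ 0 →
      μ.map (P u) = volume.withDensity (fun z => ENNReal.ofReal (f z)))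
    {p₁ ε a : ℝ} (hRlaw : ∀ u, μ.map (R u) = unifIcc a) (hp₁0 : 0 ≤ p₁) (hp₁ : 2 * p₁ < 1)
    (hε0 : 0 ≤ ε) (hε1 : p₁ + ε ≤ 1) (ha0 : 0 < a) (ha : 4 * ε ≤ (1 - 2 * p₁) * a)
    (ha2 : a ≤ 1 / 2) {t : ℝ} (ht : 0 < t) (htn : 2 * t ≤ (n - 1) * (δ * ε / 2)) :
    μ {ω | (#(criticalSet P R p₁ ε a ω) : ℝ) ≤ t} ≤ ENNReal.ofReal (2 / t) := by
  classical
  set s : Finset (Fin n) := {u | (u : ℕ) ≠ 0}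
  set Z : Fin n → Ω → ℝ × ℝ := fun u ω => (P u ω, R u ω)
  have hmean : 2 * t ≤ ∑ u ∈ s, μ.real (Z u ⁻¹' criticalRegion p₁ ε a) :=
    calc 2 * t ≤ (n - 1) * (δ * ε / 2) := htn
      _ ≤ #s * (δ * ε / 2) := by
        gcongr
        exact natCast_sub_one_le_card_filter_val_ne_zero n
      _ ≤ ∑ u ∈ s, μ.real (Z u ⁻¹' criticalRegion p₁ ε a) := by
        rw [← nsmul_eq_mul]
        refine Finset.card_nsmul_le_sum _ _ _ fun u hu => ?_
        exact le_measureReal_preimage_criticalRegion (hP u) (hR u)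
          (hindep.indepFun Sum.inl_ne_inr) hf (hPlaw u (Finset.mem_filter.1 hu).2) (hRlaw u)
          hp₁0 hp₁ hε0 hε1 ha0 ha ha2
  have hcard : ∀ ω, #{u ∈ s | Z u ω ∈ criticalRegion p₁ ε a} ≤ #(criticalSet P R p₁ ε a ω) :=
    fun ω => Finset.card_le_card fun u hu => mem_criticalSet_iff.2 (Finset.mem_filter.1 hu).2
  calc μ {ω | (#(criticalSet P R p₁ ε a ω) : ℝ) ≤ t}
      ≤ μ {ω | (#{u ∈ s | Z u ω ∈ criticalRegion p₁ ε a} : ℝ) ≤ t} :=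
        measure_mono fun ω (hω : _ ≤ t) => show _ ≤ t from (Nat.cast_le.2 (hcard ω)).trans hω
    _ ≤ ENNReal.ofReal (2 / t) :=
        measure_card_filter_mem_le_le (fun u _ => (hP u).prodMk (hR u))
          (measurableSet_criticalRegion p₁ ε a)
          (fun u _ v _ huv => hindep.indepFun_prodMk_of_sumElim hP hR huv) ht hmean

theorem critical_set_size_tendsto_general
    (f : ℝ → ℝ) (δ1 δ2 : ℝ) (hδ1 : 0 < δ1)
    (hf_in : ∀ x ∈ Set.Ioo (0:ℝ) 1, δ1 < f x ∧ f x < δ2)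
    (p₁ : ℝ) (hp₁0 : 0 ≤ p₁) (hp₁ : p₁ < 1 / 2)
    (c' β : ℝ) (hc' : 0 < c') (hβ0 : 0 < β) (hβ1 : β < 1)
    (a ε : ℕ → ℝ)
    (ha : ∀ n, a n = c' * (n : ℝ) ^ (-(1 - β)))
    (hε : ∀ n, ε n = (n : ℝ) ^ (-(1 - β / 2)))
    (Ω : ℕ → Type) (mΩ : ∀ n, MeasurableSpace (Ω n))
    (μ : (n : ℕ) → Measure (Ω n)) (hprob : ∀ n, IsProbabilityMeasure (μ n))
    (P R : (n : ℕ) → Fin n → Ω n → ℝ)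
    (hPmeas : ∀ n u, Measurable (P n u)) (hRmeas : ∀ n u, Measurable (R n u))
    -- the parameters `p_u` and the noise probabilities `R_u` are all mutually independent,
    (hindep : ∀ n, iIndepFun
      (Sum.elim (P n) (R n)) (μ n))
    -- the other users' parameters are i.i.d. with density `f_P`,
    (hPlaw : ∀ n, ∀ u : Fin n, (u : ℕ) ≠ 0 →
      Measure.map (P n u) (μ n) = volume.withDensity (fun x => ENNReal.ofReal (f x)))
    -- the noise probabilities are uniform on `[0, a_n]`:
    (hRlaw : ∀ n u, Measure.map (R n u) (μ n) = unifIcc (a n)) :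
    ∃ lam > (0:ℝ),
      Tendsto (fun n => μ n {ω |
          lam / 2 * (n : ℝ) ^ (β / 2)
            < ((criticalSet (P n) (R n) p₁ (ε n) (a n) ω).card : ℝ)})
        atTop (nhds 1) := by
  obtain rfl : ε = fun n : ℕ => (n : ℝ) ^ (-(1 - β / 2)) := funext hε
  obtain rfl : a = fun n : ℕ => c' * (n : ℝ) ^ (-(1 - β)) := funext ha
  refine ⟨δ1 / 4, by positivity, tendsto_measure_of_tendsto_measure_compl ?_⟩
  simp only [compl_ofPred, not_lt]
  have hlim : Tendsto (fun n : ℕ => ENNReal.ofReal (2 / (δ1 / 4 / 2 * (n : ℝ) ^ (β / 2))))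
      atTop (𝓝 0) := by
    rw [← ENNReal.ofReal_zero]
    refine ENNReal.tendsto_ofReal (tendsto_const_nhds.div_atTop ?_)
    exact ((tendsto_rpow_atTop (half_pos hβ0)).comp tendsto_natCast_atTop_atTop).const_mul_atTop
      (by positivity)
  refine tendsto_of_tendsto_of_tendsto_of_le_of_le' tendsto_const_nhds hlim
    (.of_forall fun n => zero_le) ?_
  filter_upwards [eventually_ge_atTop 2,
    (tendsto_natCast_rpow_neg_atTop (by linarith : 0 < 1 - β / 2)).eventually_le_const
      (by linarith : 0 < 1 - p₁),
    ((tendsto_natCast_rpow_neg_atTop (sub_pos.2 hβ1)).const_mul c').eventually_le_const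
      (by norm_num : c' * (0 : ℝ) < 1 / 2),
    eventually_four_mul_rpow_le hβ0 (by nlinarith : 0 < (1 - 2 * p₁) * c')]
    with n hn hεn han hεan
  exact measure_card_criticalSet_le_le (hPmeas n) (hRmeas n) (hindep n) hδ1.le
    (fun x hx => (hf_in x hx).1.le) (hPlaw n) (hRlaw n) hp₁0 (by linarith) (by positivity)
    (by linarith) (by positivity) (by rwa [← mul_assoc]) han (by positivity)
    (by linarith [mul_rpow_le_natCast_sub_one_mul_rpow_neg hn hδ1.le (β / 2)])

/-- **The critical set grows without bound.**  In the two-state i.i.d. model (user `1`'s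
parameter conditioned to equal `p₁` with `0 ≤ p₁ < 1/2`, the other users' parameters i.i.d.
with density `f_P` bounded between `δ₁` and `δ₂` on `(0,1)`, obfuscation noise
`R_u ~ Uniform[0, a_n]` with `a_n = c' n^{-(1-β)}`, and `ε_n = n^{-(1-β/2)}`), the size
`N⁽ⁿ⁾ = |J⁽ⁿ⁾|` of the critical set tends to infinity with high probability: there is a
`λ > 0` with `P(N⁽ⁿ⁾ > (λ/2) n^{β/2}) → 1` as `n → ∞`. -/
theorem critical_set_size_tendsto
    (f : ℝ → ℝ) (δ1 δ2 : ℝ) (hδ1 : 0 < δ1)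
    (hf_in : ∀ x ∈ Set.Ioo (0:ℝ) 1, δ1 < f x ∧ f x < δ2)
    (hf_out : ∀ x, x ∉ Set.Ioo (0:ℝ) 1 → f x = 0)
    (p₁ : ℝ) (hp₁0 : 0 ≤ p₁) (hp₁ : p₁ < 1 / 2)
    (c' β : ℝ) (hc' : 0 < c') (hβ0 : 0 < β) (hβ1 : β < 1)
    (a ε : ℕ → ℝ)
    (ha : ∀ n, a n = c' * (n : ℝ) ^ (-(1 - β)))
    (hε : ∀ n, ε n = (n : ℝ) ^ (-(1 - β / 2)))
    (Ω : ℕ → Type) (mΩ : ∀ n, MeasurableSpace (Ω n))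
    (μ : (n : ℕ) → Measure (Ω n)) (hprob : ∀ n, IsProbabilityMeasure (μ n))
    (P R : (n : ℕ) → Fin n → Ω n → ℝ)
    (hPmeas : ∀ n u, Measurable (P n u)) (hRmeas : ∀ n u, Measurable (R n u))
    -- the parameters `p_u` and the noise probabilities `R_u` are all mutually independent,
    (hindep : ∀ n, iIndepFun
      (Sum.elim (P n) (R n)) (μ n))
    -- user `1`'s parameter is (conditioned to be) `p₁`,
    (hPlaw1 : ∀ n, ∀ u : Fin n, (u : ℕ) = 0 →
      Measure.map (P n u) (μ n) = Measure.dirac p₁)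
    -- the other users' parameters are i.i.d. with density `f_P`,
    (hPlaw : ∀ n, ∀ u : Fin n, (u : ℕ) ≠ 0 →
      Measure.map (P n u) (μ n) = volume.withDensity (fun x => ENNReal.ofReal (f x)))
    -- the noise probabilities are uniform on `[0, a_n]`:
    (hRlaw : ∀ n u, Measure.map (R n u) (μ n) = unifIcc (a n)) :
    ∃ lam > (0:ℝ),
      Tendsto (fun n => μ n {ω |
          lam / 2 * (n : ℝ) ^ (β / 2)
            < ((criticalSet (P n) (R n) p₁ (ε n) (a n) ω).card : ℝ)})
        atTop (nhds 1) :=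
  critical_set_size_tendsto_general f δ1 δ2 hδ1 hf_in p₁ hp₁0 hp₁ c' β hc' hβ0 hβ1 a ε ha hε Ω mΩ μ
    hprob P R hPmeas hRmeas hindep hPlaw hRlaw

end
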